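/- Let M* ∈ ℝ^{p1×p2} have rank r with SVD M* = U*·Σ·V*^T, where Σ ∈ ℝ^{r×r} is diagonal with positive entries and U*, V* have orthonormal columns; set L* = U*·Σ^{1/2} and R* = V*·Σ^{1/2}. Then for all L ∈ ℝ^{p1×r} and R ∈ ℝ^{p2×r}, writing Δ_L = L − L* and Δ_R = R − R*, one has ‖L·R^T − L*·R*^T‖_F ≤ (1 + (1/2)·max(‖Δ_L·Σ^{-1/2}‖, ‖Δ_R·Σ^{-1/2}‖))·(‖Δ_L·Σ^{1/2}‖_F + ‖Δ_R·Σ^{1/2}‖_F). -/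

import Mathlib

/-!
Expand `L Rᵀ - L* R*ᵀ = Δ_L R*ᵀ + L* Δ_Rᵀ + Δ_L Δ_Rᵀ`. Since `V*` and `U*` have orthonormal
columns, the first two terms have Frobenius norms `‖Δ_L Σ^{1/2}‖_F` and `‖Δ_R Σ^{1/2}‖_F`.
The cross term equals `(Δ_L Σ^{1/2}) (Δ_R Σ^{-1/2})ᵀ`, and `‖A Bᵀ‖_F ≤ ‖A‖_F ‖B‖` (apply
`‖B v‖² = vᵀ BᵀB v ≤ ‖B‖² ‖v‖²` to each row `v` of `A`), so it is bounded by
`‖Δ_L Σ^{1/2}‖_F ‖Δ_R Σ^{-1/2}‖`, and symmetrically by `‖Δ_R Σ^{1/2}‖_F ‖Δ_L Σ^{-1/2}‖`;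
averaging the two bounds gives the factor `1/2`.
-/

noncomputable section

open scoped BigOperators

namespace HomoPursuit

open Matrix

/-- Squared Frobenius norm of a real matrix. -/
def frobSq {m n : Type*} [Fintype m] [Fintype n] (A : Matrix m n ℝ) : ℝ :=
  ∑ i, ∑ j, (A i j) ^ 2

/-- Frobenius norm of a real matrix. -/
def frob {m n : Type*} [Fintype m] [Fintype n] (A : Matrix m n ℝ) : ℝ :=
  Real.sqrt (frobSq A)

/-- Frobenius inner product `⟨A, B⟩ = tr(Aᵀ B)`. -/
def mdot {m n : Type*} [Fintype m] [Fintype n] (A B : Matrix m n ℝ) : ℝ :=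
  ∑ i, ∑ j, A i j * B i j

/-- The `j`-th largest singular value of a real matrix (1-indexed); `0` if out of range. -/
def sval {m n : Type*} [Fintype m] [Fintype n] [DecidableEq n] (A : Matrix m n ℝ) (j : ℕ) : ℝ :=
  (((Finset.univ.val.map fun i =>
      Real.sqrt ((show (Aᵀ * A).IsHermitian from Matrix.isHermitian_conjTranspose_mul_self A).eigenvalues i)).toList.insertionSort
      (· ≥ ·)).getD (j - 1) 0)

/-- Spectral (operator) norm: the largest singular value. -/
def spec {m n : Type*} [Fintype m] [Fintype n] [DecidableEq n] (A : Matrix m n ℝ) : ℝ :=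
  sval A 1

/-- The positive-semidefinite square root `(Aᵀ A)^{1/2}` of a Gram matrix. -/
def gramSqrt {m k : Type*} [Fintype m] [Fintype k] [DecidableEq k] (A : Matrix m k ℝ) :
    Matrix k k ℝ :=
  (Matrix.posSemidef_conjTranspose_mul_self A).1.eigenvectorUnitary.1 *
    Matrix.diagonal (Real.sqrt ∘ (Matrix.posSemidef_conjTranspose_mul_self A).1.eigenvalues) *
    (star (Matrix.posSemidef_conjTranspose_mul_self A).1.eigenvectorUnitary : Matrix k k ℝ)

/-- `(Aᵀ A)^{-1/2}`. -/
def invGramSqrt {m k : Type*} [Fintype m] [Fintype k] [DecidableEq k] (A : Matrix m k ℝ) :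
    Matrix k k ℝ :=
  (gramSqrt A)⁻¹

/-- Square root of a diagonal matrix with given (nonnegative) diagonal entries. -/
def diagSqrt {k : ℕ} (d : Fin k → ℝ) : Matrix (Fin k) (Fin k) ℝ :=
  Matrix.diagonal fun j => Real.sqrt (d j)

attribute [local instance] Matrix.frobeniusSeminormedAddCommGroup

section Frobenius

variable {m n k : Type*} [Fintype m] [Fintype n] [Fintype k]

lemma frob_nonneg (A : Matrix m n ℝ) : 0 ≤ frob A :=
  Real.sqrt_nonneg _

lemma frob_eq_norm (A : Matrix m n ℝ) : frob A = ‖A‖ := by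
  rw [frobenius_norm_def, ← Real.sqrt_eq_rpow, frob, frobSq]
  simp only [Real.rpow_two, Real.norm_eq_abs, sq_abs]

lemma frob_add_le (A B : Matrix m n ℝ) : frob (A + B) ≤ frob A + frob B := by
  simp only [frob_eq_norm]
  exact norm_add_le A B

lemma frob_transpose (A : Matrix m n ℝ) : frob Aᵀ = frob A := by
  rw [frob, frob, frobSq, frobSq, Finset.sum_comm]
  rfl

lemma frobSq_eq_sum_dotProduct (A : Matrix m n ℝ) : frobSq A = ∑ i, A i ⬝ᵥ A i := by
  simp only [frobSq, dotProduct, sq]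

lemma frobSq_mul_transpose (A : Matrix m k ℝ) (B : Matrix n k ℝ) :
    frobSq (A * Bᵀ) = ∑ i, (B *ᵥ A i) ⬝ᵥ (B *ᵥ A i) := by
  simp only [frobSq, dotProduct, sq, mul_apply, mulVec, transpose_apply, mul_comm]

lemma dotProduct_mulVec_self (B : Matrix m n ℝ) (v : n → ℝ) :
    (B *ᵥ v) ⬝ᵥ (B *ᵥ v) = v ⬝ᵥ ((Bᵀ * B) *ᵥ v) := by
  rw [← mulVec_mulVec, dotProduct_mulVec v, vecMul_transpose]

lemma frob_mul_transpose_of_orthonormal [DecidableEq k] (A : Matrix m k ℝ) {Q : Matrix n k ℝ}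
    (hQ : Qᵀ * Q = 1) : frob (A * Qᵀ) = frob A := by
  simp only [frob, frobSq_mul_transpose, dotProduct_mulVec_self, hQ, one_mulVec,
    frobSq_eq_sum_dotProduct A]

end Frobenius

lemma _root_.List.le_getD_zero_of_pairwise_ge {l : List ℝ} (hl : l.Pairwise (· ≥ ·)) {x : ℝ}
    (hx : x ∈ l) (d : ℝ) : x ≤ l.getD 0 d := by
  cases l with
  | nil => exact absurd hx List.not_mem_nil
  | cons a t =>
    rcases List.mem_cons.mp hx with rfl | ht
    · exact le_rfl
    · exact List.rel_of_pairwise_cons hl ht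

lemma _root_.List.getD_nonneg {l : List ℝ} (hl : ∀ x ∈ l, 0 ≤ x) (i : ℕ) : 0 ≤ l.getD i 0 := by
  rw [List.getD_eq_getElem?_getD]
  cases hi : l[i]? with
  | none => exact le_rfl
  | some x => exact hl x (List.mem_of_getElem? hi)

lemma isHermitian_transpose_mul_self {m n : Type*} [Fintype m] (A : Matrix m n ℝ) :
    (Aᵀ * A).IsHermitian :=
  isHermitian_conjTranspose_mul_self A

section Spectral

variable {m n : Type*} [Fintype m] [Fintype n] [DecidableEq n]

def singularValues (A : Matrix m n ℝ) : Multiset ℝ :=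
  Finset.univ.val.map fun i => Real.sqrt ((isHermitian_transpose_mul_self A).eigenvalues i)

lemma spec_eq_getD (A : Matrix m n ℝ) :
    spec A = ((singularValues A).toList.insertionSort (· ≥ ·)).getD 0 0 :=
  rfl

lemma le_spec_of_mem_singularValues (A : Matrix m n ℝ) {x : ℝ} (hx : x ∈ singularValues A) :
    x ≤ spec A :=
  spec_eq_getD A ▸ List.le_getD_zero_of_pairwise_ge (List.pairwise_insertionSort _ _)
    ((List.mem_insertionSort _).mpr (Multiset.mem_toList.mpr hx)) 0

lemma spec_nonneg (A : Matrix m n ℝ) : 0 ≤ spec A := by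
  refine spec_eq_getD A ▸ List.getD_nonneg (fun x hx => ?_) 0
  obtain ⟨i, -, rfl⟩ :=
    Multiset.mem_map.mp (Multiset.mem_toList.mp ((List.mem_insertionSort _).mp hx))
  exact Real.sqrt_nonneg _

lemma eigenvalues_transpose_mul_self_le_spec_sq (A : Matrix m n ℝ) (i : n) :
    (isHermitian_transpose_mul_self A).eigenvalues i ≤ spec A ^ 2 := by
  have hsqrt : Real.sqrt ((isHermitian_transpose_mul_self A).eigenvalues i) ≤ spec A :=
    le_spec_of_mem_singularValues A (Multiset.mem_map_of_mem _ (Finset.mem_univ_val i))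
  exact (Real.sqrt_le_left (spec_nonneg A)).mp hsqrt

lemma _root_.Matrix.IsHermitian.dotProduct_mulVec_le {H : Matrix n n ℝ} (hH : H.IsHermitian)
    {c : ℝ} (hc : ∀ i, hH.eigenvalues i ≤ c) (v : n → ℝ) : v ⬝ᵥ (H *ᵥ v) ≤ c * (v ⬝ᵥ v) := by
  have hpsd : (c • (1 : Matrix n n ℝ) - H).PosSemidef := by
    refine posSemidef_iff_isHermitian_and_spectrum_nonneg.mpr ⟨?_, ?_⟩
    · exact ((isHermitian_one).smul (IsSelfAdjoint.all c)).sub hH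
    · rw [← Algebra.algebraMap_eq_smul_one, ← spectrum.singleton_sub_eq,
        hH.spectrum_real_eq_range_eigenvalues]
      rintro _ ⟨_, rfl, _, ⟨i, rfl⟩, rfl⟩
      exact sub_nonneg.mpr (hc i)
  simpa [sub_mulVec, smul_mulVec, dotProduct_sub, dotProduct_smul] using
    hpsd.dotProduct_mulVec_nonneg v

lemma dotProduct_mulVec_self_le_spec_sq (B : Matrix m n ℝ) (v : n → ℝ) :
    (B *ᵥ v) ⬝ᵥ (B *ᵥ v) ≤ spec B ^ 2 * (v ⬝ᵥ v) :=
  dotProduct_mulVec_self B v ▸ (isHermitian_transpose_mul_self B).dotProduct_mulVec_le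
    (eigenvalues_transpose_mul_self_le_spec_sq B) v

lemma frob_mul_transpose_le {p : Type*} [Fintype p] (A : Matrix p n ℝ) (B : Matrix m n ℝ) :
    frob (A * Bᵀ) ≤ frob A * spec B := by
  have hsq : frobSq (A * Bᵀ) ≤ spec B ^ 2 * frobSq A := by
    rw [frobSq_mul_transpose, frobSq_eq_sum_dotProduct, Finset.mul_sum]
    exact Finset.sum_le_sum fun i _ => dotProduct_mulVec_self_le_spec_sq B (A i)
  calc frob (A * Bᵀ) ≤ Real.sqrt (spec B ^ 2 * frobSq A) := Real.sqrt_le_sqrt hsq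
    _ = frob A * spec B := by
      rw [Real.sqrt_mul (sq_nonneg _), Real.sqrt_sq (spec_nonneg B), mul_comm, frob]

end Spectral

lemma mul_transpose_sub_mul_transpose {m n k : Type*} [Fintype k] (L L₀ : Matrix m k ℝ)
    (R R₀ : Matrix n k ℝ) :
    L * Rᵀ - L₀ * R₀ᵀ = (L - L₀) * R₀ᵀ + L₀ * (R - R₀)ᵀ + (L - L₀) * (R - R₀)ᵀ := by
  simp only [transpose_sub, Matrix.sub_mul, Matrix.mul_sub]
  abel

section Factored

variable {m n k : Type*} [Fintype m] [Fintype n] [Fintype k] [DecidableEq k]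

lemma frob_mul_transpose_orthonormal_mul {S : Matrix k k ℝ} (hS : Sᵀ = S) (X : Matrix m k ℝ)
    {Q : Matrix n k ℝ} (hQ : Qᵀ * Q = 1) : frob (X * (Q * S)ᵀ) = frob (X * S) := by
  rw [transpose_mul, hS, ← Matrix.mul_assoc, frob_mul_transpose_of_orthonormal _ hQ]

lemma frob_mul_transpose_le_frob_mul_spec {S : Matrix k k ℝ} (hS : Sᵀ = S) (hdet : IsUnit S.det)
    (X : Matrix m k ℝ) (Y : Matrix n k ℝ) : frob (X * Yᵀ) ≤ frob (X * S) * spec (Y * S⁻¹) := by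
  have hXY : X * Yᵀ = X * S * (Y * S⁻¹)ᵀ := by
    rw [transpose_mul, transpose_nonsing_inv, hS, Matrix.mul_assoc, ← Matrix.mul_assoc S,
      mul_nonsing_inv S hdet, Matrix.one_mul]
  exact hXY ▸ frob_mul_transpose_le _ _

end Factored

lemma diagSqrt_transpose {r : ℕ} (d : Fin r → ℝ) : (diagSqrt d)ᵀ = diagSqrt d :=
  diagonal_transpose _

lemma isUnit_det_diagSqrt {r : ℕ} {d : Fin r → ℝ} (hd : ∀ j, 0 < d j) :
    IsUnit (diagSqrt d).det := by
  rw [diagSqrt, det_diagonal, isUnit_iff_ne_zero]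
  exact Finset.prod_ne_zero_iff.mpr fun j _ => (Real.sqrt_pos.mpr (hd j)).ne'

theorem factored_product_perturbation_general
    (p1 p2 r : ℕ)
    (Us : Matrix (Fin p1) (Fin r) ℝ) (Vs : Matrix (Fin p2) (Fin r) ℝ) (Sd : Fin r → ℝ)
    (hSpos : ∀ j, 0 < Sd j)
    (hU : Usᵀ * Us = 1) (hV : Vsᵀ * Vs = 1)
    (L : Matrix (Fin p1) (Fin r) ℝ) (R : Matrix (Fin p2) (Fin r) ℝ) :
    frob (L * Rᵀ - (Us * diagSqrt Sd) * (Vs * diagSqrt Sd)ᵀ) ≤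
      (1 + 1 / 2 * max (spec ((L - Us * diagSqrt Sd) * (diagSqrt Sd)⁻¹))
          (spec ((R - Vs * diagSqrt Sd) * (diagSqrt Sd)⁻¹))) *
        (frob ((L - Us * diagSqrt Sd) * diagSqrt Sd) +
          frob ((R - Vs * diagSqrt Sd) * diagSqrt Sd)) := by
  set S := diagSqrt Sd
  have hS : Sᵀ = S := diagSqrt_transpose Sd
  have hdet : IsUnit S.det := isUnit_det_diagSqrt hSpos
  set ΔL := L - Us * S
  set ΔR := R - Vs * S
  have hfirst : frob (ΔL * (Vs * S)ᵀ) = frob (ΔL * S) :=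
    frob_mul_transpose_orthonormal_mul hS ΔL hV
  have hsecond : frob (Us * S * ΔRᵀ) = frob (ΔR * S) := by
    rw [← frob_transpose, transpose_mul, transpose_transpose,
      frob_mul_transpose_orthonormal_mul hS ΔR hU]
  have hcrossL : frob (ΔL * ΔRᵀ) ≤ frob (ΔL * S) * spec (ΔR * S⁻¹) :=
    frob_mul_transpose_le_frob_mul_spec hS hdet ΔL ΔR
  have hcrossR : frob (ΔL * ΔRᵀ) ≤ frob (ΔR * S) * spec (ΔL * S⁻¹) := by
    rw [← frob_transpose, transpose_mul, transpose_transpose]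
    exact frob_mul_transpose_le_frob_mul_spec hS hdet ΔR ΔL
  have hmaxL := mul_le_mul_of_nonneg_left (le_max_right (spec (ΔL * S⁻¹)) (spec (ΔR * S⁻¹)))
    (frob_nonneg (ΔL * S))
  have hmaxR := mul_le_mul_of_nonneg_left (le_max_left (spec (ΔL * S⁻¹)) (spec (ΔR * S⁻¹)))
    (frob_nonneg (ΔR * S))
  calc frob (L * Rᵀ - Us * S * (Vs * S)ᵀ)
      ≤ frob (ΔL * (Vs * S)ᵀ) + frob (Us * S * ΔRᵀ) + frob (ΔL * ΔRᵀ) := by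
        rw [mul_transpose_sub_mul_transpose]
        exact (frob_add_le _ _).trans (add_le_add_left (frob_add_le _ _) _)
    -- bound the cross term by the average of its two estimates
    _ ≤ _ := by linarith

/-- **Lemma (factored product perturbation, Frobenius bound).** -/
theorem factored_product_perturbation
    (p1 p2 r : ℕ) (Ms : Matrix (Fin p1) (Fin p2) ℝ)
    (Us : Matrix (Fin p1) (Fin r) ℝ) (Vs : Matrix (Fin p2) (Fin r) ℝ) (Sd : Fin r → ℝ)
    (hSpos : ∀ j, 0 < Sd j)
    (hU : Usᵀ * Us = 1) (hV : Vsᵀ * Vs = 1)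
    (hSVD : Ms = Us * Matrix.diagonal Sd * Vsᵀ)
    (hrank : Ms.rank = r)
    (L : Matrix (Fin p1) (Fin r) ℝ) (R : Matrix (Fin p2) (Fin r) ℝ) :
    frob (L * Rᵀ - (Us * diagSqrt Sd) * (Vs * diagSqrt Sd)ᵀ) ≤
      (1 + 1 / 2 * max (spec ((L - Us * diagSqrt Sd) * (diagSqrt Sd)⁻¹))
          (spec ((R - Vs * diagSqrt Sd) * (diagSqrt Sd)⁻¹))) *
        (frob ((L - Us * diagSqrt Sd) * diagSqrt Sd) +
          frob ((R - Vs * diagSqrt Sd) * diagSqrt Sd)) :=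
  factored_product_perturbation_general p1 p2 r Us Vs Sd hSpos hU hV L R

end HomoPursuit
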